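/- arXiv:2406.06956 — 5 statements merged into one kernel-verified Lean document; each statement's English description precedes it below -/
import Mathlib

section
/- Let q : ℕ → ℕ with q_k ≥ 1 for all k and q_k → ∞, and let P be the associated set of sequences. For every y ∈ P, every sequence of positive integers n_j → ∞, and every y' ∈ {−1,0,1}^ℕ such that σ^{n_j} y converges pointwise to y', there exists p ≥ 0 such that σ^p y' is the all-zero sequence; equivalently, y' has only finitely many nonzero entries. -/
open Classical in
/-- The sequence `s_{k,q} : ℕ → {0,1}` (viewed in `ℤ`), equal to `1` exactly at the
points `k³ + j·q` with `0 ≤ j ≤ ⌊((k+1)³ − k³)/q⌋ − 1`. -/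
noncomputable def skq (k q : ℕ) (n : ℕ) : ℤ :=
  if ∃ j : ℕ, j + 1 ≤ ((k + 1) ^ 3 - k ^ 3) / q ∧ n = k ^ 3 + j * q then 1 else 0

/-- `σ^{−p} x`: the sequence equal to `0` in its first `p` entries and with
`(σ^{−p}x)(n) = x(n−p)` for `n > p`. -/
def shiftDown (p : ℕ) (x : ℕ → ℤ) : ℕ → ℤ := fun n => if p < n then x (n - p) else 0

/-- Membership in the set `P` associated to `q : ℕ → ℕ`: for every `k ≥ 1`, the
restriction of `y` to `[k³, (k+1)³)` is the corresponding restriction of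
`σ^{−p} s_{k,q_k}` for some `0 ≤ p ≤ q_k`. -/
def memP (q : ℕ → ℕ) (y : ℕ → ℤ) : Prop :=
  ∀ k, 1 ≤ k → ∃ p, p ≤ q k ∧
    ∀ n, k ^ 3 ≤ n → n < (k + 1) ^ 3 → y n = shiftDown p (skq k (q k)) n

lemma exists_block (n : ℕ) (hn : 1 ≤ n) : ∃ k, 1 ≤ k ∧ k ^ 3 ≤ n ∧ n < (k + 1) ^ 3 := by
  induction n with
  | zero => omega
  | succ n ih =>
    rcases Nat.lt_or_ge n 1 with h | h
    · refine ⟨1, by norm_num, by omega, by norm_num; omega⟩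
    · obtain ⟨k, hk1, hk2, hk3⟩ := ih h
      by_cases hc : n + 1 < (k + 1) ^ 3
      · exact ⟨k, hk1, by omega, hc⟩
      · refine ⟨k + 1, by omega, by omega, ?_⟩
        have : n + 1 = (k + 1) ^ 3 := by omega
        have h2 : (k + 1) ^ 3 < (k + 1 + 1) ^ 3 := by nlinarith
        omega

lemma spacing (q : ℕ → ℕ) (y : ℕ → ℤ) (hyP : memP q y) (k : ℕ) (hk : 1 ≤ k)
    (u v : ℕ) (hu1 : k ^ 3 ≤ u) (huv : u < v) (hv : v < (k + 1) ^ 3)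
    (hyu : y u ≠ 0) (hyv : y v ≠ 0) : q k ≤ v - u := by
  obtain ⟨p, hp, hblock⟩ := hyP k hk
  have hu := hblock u hu1 (lt_trans huv hv)
  have hv' := hblock v (le_trans hu1 (le_of_lt huv)) hv
  rw [hu] at hyu; rw [hv'] at hyv
  unfold shiftDown at hyu hyv
  have h1 : p < u := by by_contra h; simp [h] at hyu
  have h2 : p < v := by by_contra h; simp [h] at hyv
  rw [if_pos h1] at hyu
  rw [if_pos h2] at hyv
  have hc1 : ∃ j : ℕ, j + 1 ≤ ((k + 1) ^ 3 - k ^ 3) / (q k) ∧ u - p = k ^ 3 + j * q k := by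
    by_contra hc; simp only [skq, if_neg hc] at hyu; exact hyu rfl
  have hc2 : ∃ j : ℕ, j + 1 ≤ ((k + 1) ^ 3 - k ^ 3) / (q k) ∧ v - p = k ^ 3 + j * q k := by
    by_contra hc; simp only [skq, if_neg hc] at hyv; exact hyv rfl
  obtain ⟨j, _, hje⟩ := hc1
  obtain ⟨j', _, hje'⟩ := hc2
  have hu' : u = k ^ 3 + j * q k + p := by omega
  have hv'' : v = k ^ 3 + j' * q k + p := by omega
  have hjj : j * q k < j' * q k := by omega
  have hjlt : j < j' := Nat.lt_of_mul_lt_mul_right hjj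
  have : (j + 1) * q k ≤ j' * q k := Nat.mul_le_mul_right _ hjlt
  have : j * q k + q k ≤ j' * q k := by rw [Nat.add_mul, one_mul] at this; omega
  omega

/-- every pointwise limit of shifts of an element of `P` has only
finitely many nonzero entries, i.e. some shift of it is the all-zero sequence. -/
theorem stmt_8 (q : ℕ → ℕ) (hq1 : ∀ k, 1 ≤ q k) (hq : Filter.Tendsto q Filter.atTop Filter.atTop)
    (y : ℕ → ℤ) (hyval : ∀ n, y n = -1 ∨ y n = 0 ∨ y n = 1) (hyP : memP q y)
    (nseq : ℕ → ℕ) (hpos : ∀ j, 1 ≤ nseq j)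
    (hnseq : Filter.Tendsto nseq Filter.atTop Filter.atTop)
    (y' : ℕ → ℤ)
    (hconv : ∀ m : ℕ, ∀ᶠ j in Filter.atTop, y (m + nseq j) = y' m) :
    ∃ p : ℕ, ∀ n, 1 ≤ n → y' (n + p) = 0 := by
  by_contra h
  push_neg at h
  obtain ⟨a1, ha1, hya1⟩ := h 0
  obtain ⟨d2, hd2, hya2⟩ := h a1
  obtain ⟨d3, hd3, hya3⟩ := h (d2 + a1)
  set a2 := d2 + a1 with ha2def
  set a3 := d3 + a2 with ha3def
  have ha12 : a1 < a2 := by omega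
  have ha23 : a2 < a3 := by omega
  set L := a3 - a1 with hLdef
  -- K0 : q k ≥ L + 1 for k ≥ K0
  obtain ⟨K0, hK0⟩ := Filter.eventually_atTop.mp (hq.eventually_ge_atTop (L + 1))
  set K := max K0 (L + 1) with hKdef
  have hev : ∀ᶠ j in Filter.atTop,
      (K ^ 3 ≤ nseq j ∧ y (a1 + nseq j) = y' a1) ∧
      y (a2 + nseq j) = y' a2 ∧ y (a3 + nseq j) = y' a3 :=
    ((hnseq.eventually_ge_atTop (K ^ 3)).and (hconv a1)).and ((hconv a2).and (hconv a3))
  obtain ⟨j, ⟨hjN, hj1⟩, hj2, hj3⟩ := hev.exists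
  set N := nseq j with hNdef
  have hy1 : y (a1 + N) ≠ 0 := by rw [hj1]; simpa using hya1
  have hy2 : y (a2 + N) ≠ 0 := by rw [hj2]; exact hya2
  have hy3 : y (a3 + N) ≠ 0 := by rw [hj3]; exact hya3
  obtain ⟨k, hk1, hkle, hklt⟩ := exists_block (a1 + N) (by omega)
  -- k ≥ K
  have hkK : K ≤ k := by
    by_contra hc
    push_neg at hc
    have : (k + 1) ^ 3 ≤ K ^ 3 := Nat.pow_le_pow_left (by omega) 3
    omega
  have hqk : L + 1 ≤ q k := hK0 k (by omega)
  have hqk1 : L + 1 ≤ q (k + 1) := hK0 (k + 1) (by omega)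
  have hkL : L + 1 ≤ k := by omega
  have hu3 : a3 + N < (k + 1 + 1) ^ 3 := by
    have h2 : (k + 1) ^ 3 + k ≤ (k + 1 + 1) ^ 3 := by nlinarith
    omega
  by_cases hc : a2 + N < (k + 1) ^ 3
  · have := spacing q y hyP k hk1 (a1 + N) (a2 + N) hkle (by omega) hc hy1 hy2
    omega
  · push_neg at hc
    have := spacing q y hyP (k + 1) (by omega) (a2 + N) (a3 + N) hc (by omega) hu3 hy2 hy3
    omega
end

section
/- For every w ∈ A, every sequence of positive integers n_j → ∞, and every w' ∈ {0,1}^ℕ such that σ^{n_j} w converges pointwise to w', there exists p ≥ 0 such that σ^p w' is a constant sequence. -/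
/-- Membership in the set `A ⊆ {0,1}^ℕ`: `w(i) = w(i+1)` whenever
`k³ ≤ i < (k+1)³ − 1` for some `k ≥ 1`. -/
def memA (w : ℕ → Fin 2) : Prop :=
  ∀ k, 1 ≤ k → ∀ i, k ^ 3 ≤ i → i < (k + 1) ^ 3 - 1 → w i = w (i + 1)

lemma jump_boundary (w : ℕ → Fin 2) (hw : memA w) (m : ℕ) (hm : 1 ≤ m)
    (hj : w m ≠ w (m + 1)) : ∃ k, 1 ≤ k ∧ m + 1 = (k + 1) ^ 3 := by
  set k := Nat.findGreatest (fun k => k ^ 3 ≤ m) m with hk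
  have hP1 : (fun k => k ^ 3 ≤ m) 1 := by simpa using hm
  have h1 : 1 ≤ k := Nat.le_findGreatest hm hP1
  have h2 : k ^ 3 ≤ m :=
    Nat.findGreatest_spec (P := fun k => k ^ 3 ≤ m) hm hP1
  have h3 : m < (k + 1) ^ 3 := by
    by_contra h
    push_neg at h
    have hk1m : k + 1 ≤ m := le_trans (Nat.le_self_pow (by norm_num) _) h
    exact Nat.findGreatest_is_greatest (Nat.lt_succ_self k) hk1m h
  have h4 : ¬ m < (k + 1) ^ 3 - 1 := fun h => hj (hw k h1 m h2 h)
  push_neg at h4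
  refine ⟨k, h1, ?_⟩
  omega

lemma no_two_jumps (w : ℕ → Fin 2) (hw : memA w)
    (nseq : ℕ → ℕ) (hnseq : Filter.Tendsto nseq Filter.atTop Filter.atTop)
    (w' : ℕ → Fin 2)
    (hconv : ∀ m : ℕ, ∀ᶠ j in Filter.atTop, w (m + nseq j) = w' m)
    (i i' : ℕ) (hi : 1 ≤ i) (hii' : i < i')
    (hj1 : w' i ≠ w' (i + 1)) (hj2 : w' i' ≠ w' (i' + 1)) : False := by
  have hev := ((((hconv i).and (hconv (i + 1))).and
    ((hconv i').and (hconv (i' + 1)))).and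
    (hnseq.eventually_ge_atTop (i' ^ 3 + 1)))
  obtain ⟨j, ⟨⟨⟨e1, e2⟩, e3, e4⟩, hN⟩⟩ := hev.exists
  set n := nseq j with hn
  have jump1 : w (i + n) ≠ w ((i + n) + 1) := by
    have : (i + n) + 1 = (i + 1) + n := by ring
    rw [e1, this, e2]; exact hj1
  have jump2 : w (i' + n) ≠ w ((i' + n) + 1) := by
    have : (i' + n) + 1 = (i' + 1) + n := by ring
    rw [e3, this, e4]; exact hj2
  obtain ⟨k1, hk1, hb1⟩ := jump_boundary w hw (i + n) (by omega) jump1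
  obtain ⟨k2, hk2, hb2⟩ := jump_boundary w hw (i' + n) (by omega) jump2
  have hlt : (k1 + 1) ^ 3 < (k2 + 1) ^ 3 := by omega
  have hk12 : k1 < k2 := by
    by_contra h
    push_neg at h
    exact absurd (Nat.pow_le_pow_left (by omega) 3) (not_le.mpr hlt)
  have hbig : i' < k1 + 1 := by
    by_contra h
    push_neg at h
    have : (k1 + 1) ^ 3 ≤ i' ^ 3 := Nat.pow_le_pow_left h 3
    omega
  have hstep : (k1 + 2) ^ 3 ≤ (k2 + 1) ^ 3 := Nat.pow_le_pow_left (by omega) 3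
  have hgap : (k1 + 1) ^ 3 + 3 * (k1 + 1) ^ 2 ≤ (k1 + 2) ^ 3 := by nlinarith
  have : (i' + 1) ^ 2 ≤ (k1 + 1) ^ 2 := Nat.pow_le_pow_left (by omega) 2
  nlinarith

/-- every pointwise limit of shifts of an element of `A` is eventually
constant: some shift of it is a constant sequence. -/
theorem stmt_9 (w : ℕ → Fin 2) (hw : memA w)
    (nseq : ℕ → ℕ) (hpos : ∀ j, 1 ≤ nseq j)
    (hnseq : Filter.Tendsto nseq Filter.atTop Filter.atTop)
    (w' : ℕ → Fin 2)
    (hconv : ∀ m : ℕ, ∀ᶠ j in Filter.atTop, w (m + nseq j) = w' m) :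
    ∃ p : ℕ, ∃ c : Fin 2, ∀ n, 1 ≤ n → w' (n + p) = c := by
  by_cases h : ∃ i, 1 ≤ i ∧ w' i ≠ w' (i + 1)
  · obtain ⟨i, hi1, hij⟩ := h
    refine ⟨i, w' (i + 1), ?_⟩
    intro n hn
    induction n with
    | zero => omega
    | succ m ih =>
      rcases Nat.eq_or_lt_of_le hn with h1 | h1
      · rw [← h1]; ring_nf
      · have hm : 1 ≤ m := by omega
        have heq : w' (m + i) = w' ((m + i) + 1) := by
          by_contra hne
          exact no_two_jumps w hw nseq hnseq w' hconv i (m + i) hi1 (by omega) hij hne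
        have : m + 1 + i = (m + i) + 1 := by ring
        rw [this, ← heq]
        exact ih hm
  · push_neg at h
    refine ⟨0, w' 1, ?_⟩
    intro n hn
    induction n with
    | zero => omega
    | succ m ih =>
      rcases Nat.eq_or_lt_of_le hn with h1 | h1
      · rw [← h1]
      · have hm : 1 ≤ m := by omega
        have := h m hm
        simpa using (this ▸ ih hm)
end

section
/- Every σ-invariant ergodic Borel probability measure on Σ is either the Dirac measure at the constant-0 sequence or the Dirac measure at the constant-1 sequence. -/
open MeasureTheory

/-- The left shift on `{0,1}^ℕ`. -/
def shiftB (w : ℕ → Fin 2) : ℕ → Fin 2 := fun n => w (n + 1)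

/-- The set `A`: sequences with `w(i) = w(i+1)` whenever `k³ ≤ i < (k+1)³ − 1`
for some `k ≥ 1`. -/
def setA : Set (ℕ → Fin 2) :=
  {w | ∀ k, 1 ≤ k → ∀ i, k ^ 3 ≤ i → i < (k + 1) ^ 3 - 1 → w i = w (i + 1)}

/-- `Σ`: the closure of `∪_{l ≥ 0} σ^l A` in the product topology. -/
def SigmaSet : Set (ℕ → Fin 2) := closure (⋃ l : ℕ, shiftB^[l] '' setA)

/-!
In a shifted point `σˡ v` with `v ∈ A`, a switch `w i ≠ w (i + 1)` can only occur where
`i + l + 1` is a cube, and a window `(l, l + n³]` contains at most `n` cubes; this bound on the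
number of switches in `[0, n³)` depends on finitely many coordinates, so it passes to the
closure `Σ`. For a shift-invariant `μ` the probability of a switch at `i` does not depend on `i`,
so `n³ · μ(switch at 0) ≤ n` for all `n`, which forces it to vanish: `μ`-a.e. point is a fixed
point of `σ`. Ergodicity then makes the identity a.e. constant, so `μ` is a Dirac mass at a
fixed point of `σ`, i.e. at a constant sequence.
-/

open Topology ENNReal

def switchesBelow {α : Type*} [DecidableEq α] (w : ℕ → α) (N : ℕ) : Finset ℕ :=
  (Finset.range N).filter fun i => w i ≠ w (i + 1)

lemma shiftB_iterate_apply (l : ℕ) (w : ℕ → Fin 2) (n : ℕ) : shiftB^[l] w n = w (n + l) := by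
  induction l generalizing w with
  | zero => rfl
  | succ l ih => rw [Function.iterate_succ_apply, ih]; rfl

lemma eq_const_of_shiftB_eq_self {w : ℕ → Fin 2} (hw : shiftB w = w) : w = fun _ => w 0 := by
  funext i
  induction i with
  | zero => rfl
  | succ i ih => rw [← ih, ← congrFun hw i, shiftB]

lemma exists_succ_eq_cube_of_mem_setA {v : ℕ → Fin 2} (hv : v ∈ setA) {j : ℕ}
    (hj : v j ≠ v (j + 1)) : ∃ K, j + 1 = K ^ 3 := by
  -- With `K` least such that `j < K³`, the index `j` lies in the block `[(K-1)³, K³)`, on which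
  -- points of `A` are constant; so `j` must be the last index of that block.
  have hex : ∃ K, j < K ^ 3 := ⟨j + 1, j.lt_succ_self.trans_le (Nat.le_self_pow three_ne_zero _)⟩
  set K := Nat.find hex
  have hjK : j < K ^ 3 := Nat.find_spec hex
  have hK : 1 ≤ K := Nat.one_le_iff_ne_zero.2 fun h => by simp [h] at hjK
  have hKj : (K - 1) ^ 3 ≤ j := not_lt.1 (Nat.find_min hex (by omega))
  refine ⟨K, ?_⟩
  by_contra hne
  have hK1 : 1 ≤ K - 1 := by
    by_contra h
    have hK_eq : K = 1 := by omega
    simp only [hK_eq, one_pow] at hjK hne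
    omega
  refine hj (hv (K - 1) hK1 j hKj ?_)
  rw [Nat.sub_add_cancel hK]
  omega

lemma card_filter_cube_mem_Ioc_le (a n : ℕ) :
    ((Finset.range (a + n ^ 3 + 1)).filter fun K => a < K ^ 3 ∧ K ^ 3 ≤ a + n ^ 3).card ≤ n := by
  set T := (Finset.range (a + n ^ 3 + 1)).filter fun K => a < K ^ 3 ∧ K ^ 3 ≤ a + n ^ 3
  rcases T.eq_empty_or_nonempty with hT | hT
  · simp [hT]
  have hsub : T ⊆ Finset.Ico (T.min' hT) (T.min' hT + n) := by
    intro K hK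
    have hmin := T.min'_le K hK
    have hmT := (Finset.mem_filter.1 (T.min'_mem hT)).2.1
    have hKT := (Finset.mem_filter.1 hK).2.2
    have hcube : (T.min' hT) ^ 3 + (K - T.min' hT) ^ 3 ≤ K ^ 3 := by
      simpa [Nat.add_sub_cancel' hmin] using
        pow_add_pow_le (Nat.zero_le (T.min' hT)) (Nat.zero_le (K - T.min' hT)) three_ne_zero
    have : K - T.min' hT < n :=
      (Nat.pow_lt_pow_iff_left three_ne_zero).1 (by omega)
    exact Finset.mem_Ico.2 ⟨hmin, by omega⟩
  simpa using Finset.card_le_card hsub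

lemma card_switchesBelow_iterate_shiftB_le {v : ℕ → Fin 2} (hv : v ∈ setA) (l n : ℕ) :
    (switchesBelow (shiftB^[l] v) (n ^ 3)).card ≤ n := by
  set T := (Finset.range (l + n ^ 3 + 1)).filter fun K => l < K ^ 3 ∧ K ^ 3 ≤ l + n ^ 3
  have hsub : switchesBelow (shiftB^[l] v) (n ^ 3) ⊆ T.image fun K => K ^ 3 - (l + 1) := by
    intro i hi
    simp only [switchesBelow, Finset.mem_filter, Finset.mem_range, shiftB_iterate_apply,
      add_right_comm i 1 l] at hi
    obtain ⟨K, hK⟩ := exists_succ_eq_cube_of_mem_setA hv hi.2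
    have hKle : K ≤ K ^ 3 := Nat.le_self_pow three_ne_zero K
    exact Finset.mem_image.2 ⟨K, Finset.mem_filter.2 ⟨Finset.mem_range.2 (by omega), by omega⟩,
      by omega⟩
  calc _ ≤ (T.image fun K => K ^ 3 - (l + 1)).card := Finset.card_le_card hsub
    _ ≤ T.card := Finset.card_image_le
    _ ≤ n := card_filter_cube_mem_Ioc_le l n

lemma switchesBelow_congr {α : Type*} [DecidableEq α] {w w' : ℕ → α} {N : ℕ}
    (h : ∀ i ≤ N, w i = w' i) : switchesBelow w N = switchesBelow w' N :=
  Finset.filter_congr fun i hi => by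
    rw [h i (Finset.mem_range.1 hi).le, h (i + 1) (Finset.mem_range.1 hi)]

lemma isLocallyConstant_switchesBelow {α : Type*} [TopologicalSpace α] [DiscreteTopology α]
    [DecidableEq α] (N : ℕ) : IsLocallyConstant fun w : ℕ → α => switchesBelow w N := by
  refine (IsLocallyConstant.iff_eventually_eq _).2 fun w => ?_
  have hcoord : ∀ i, ∀ᶠ w' in 𝓝 w, w' i = w i := fun i =>
    (continuous_apply i).continuousAt.eventually_mem ((isOpen_discrete {w i}).mem_nhds rfl)
  filter_upwards [(Finset.range (N + 1)).eventually_all.2 fun i _ => hcoord i] with w' hw'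
  exact switchesBelow_congr fun i hi => hw' i (Finset.mem_range.2 (Nat.lt_succ_of_le hi))

lemma card_switchesBelow_le_of_mem_sigmaSet {w : ℕ → Fin 2} (hw : w ∈ SigmaSet) (n : ℕ) :
    (switchesBelow w (n ^ 3)).card ≤ n := by
  have hclosed : IsClosed {w : ℕ → Fin 2 | (switchesBelow w (n ^ 3)).card ≤ n} :=
    isClosed_le ((isLocallyConstant_switchesBelow _).comp Finset.card).continuous continuous_const
  refine closure_minimal ?_ hclosed hw
  rintro _ ⟨_, ⟨l, rfl⟩, v, hv, rfl⟩
  exact card_switchesBelow_iterate_shiftB_le hv l n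

lemma ENNReal.eq_zero_of_forall_pow_three_mul_le_self {c : ℝ≥0∞}
    (h : ∀ n : ℕ, (n : ℝ≥0∞) ^ 3 * c ≤ n) : c = 0 := by
  by_contra hc
  obtain ⟨m, hm⟩ := ENNReal.exists_inv_nat_lt hc
  have hm0 : (m : ℝ≥0∞) ≠ 0 := fun h => by simp [h] at hm
  have hlt : (m : ℝ≥0∞) ^ 2 < m :=
    calc (m : ℝ≥0∞) ^ 2 = m ^ 3 * (m : ℝ≥0∞)⁻¹ := by
          rw [pow_succ _ 2, mul_assoc, ENNReal.mul_inv_cancel hm0 (natCast_ne_top m), mul_one]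
      _ < m ^ 3 * c := by
          rw [mul_comm _ c, mul_comm _ (m : ℝ≥0∞)⁻¹]
          exact ENNReal.mul_lt_mul_left (pow_ne_zero 3 hm0) (pow_ne_top (natCast_ne_top m)) hm
      _ ≤ m := h m
  have : m ^ 2 < m := by exact_mod_cast hlt
  nlinarith

section Measure

variable {μ : Measure (ℕ → Fin 2)}

lemma measurableSet_setOf_apply_ne_apply_succ (i : ℕ) :
    MeasurableSet {w : ℕ → Fin 2 | w i ≠ w (i + 1)} :=
  (measurableSet_eq_fun (measurable_pi_apply i) (measurable_pi_apply (i + 1))).compl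

lemma measure_setOf_apply_ne_apply_succ (hμ : MeasurePreserving shiftB μ μ) (i : ℕ) :
    μ {w | w i ≠ w (i + 1)} = μ {w | w 0 ≠ w 1} := by
  have : {w : ℕ → Fin 2 | w i ≠ w (i + 1)} = shiftB^[i] ⁻¹' {w | w 0 ≠ w 1} := by
    ext w
    simp [shiftB_iterate_apply, add_comm 1 i]
  rw [this, (hμ.iterate i).measure_preimage
    (measurableSet_setOf_apply_ne_apply_succ 0).nullMeasurableSet]

lemma lintegral_card_switchesBelow (N : ℕ) :
    ∫⁻ w, ((switchesBelow w N).card : ℝ≥0∞) ∂μ =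
      ∑ i ∈ Finset.range N, μ {w | w i ≠ w (i + 1)} := by
  have hcard : ∀ w : ℕ → Fin 2, ((switchesBelow w N).card : ℝ≥0∞) =
      ∑ i ∈ Finset.range N, {w : ℕ → Fin 2 | w i ≠ w (i + 1)}.indicator 1 w := by
    intro w
    simp [switchesBelow, Finset.card_filter, Set.indicator_apply]
  simp_rw [hcard]
  rw [lintegral_finsetSum _ fun i _ =>
    measurable_one.indicator (measurableSet_setOf_apply_ne_apply_succ i)]
  simp [lintegral_indicator_one (measurableSet_setOf_apply_ne_apply_succ _)]

lemma measure_setOf_apply_zero_ne_apply_one_eq_zero [IsProbabilityMeasure μ]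
    (hμ : MeasurePreserving shiftB μ μ) (hsigma : ∀ᵐ w ∂μ, w ∈ SigmaSet) :
    μ {w | w 0 ≠ w 1} = 0 := by
  refine ENNReal.eq_zero_of_forall_pow_three_mul_le_self fun n => ?_
  calc (n : ℝ≥0∞) ^ 3 * μ {w | w 0 ≠ w 1}
      = ∑ i ∈ Finset.range (n ^ 3), μ {w | w i ≠ w (i + 1)} := by
        simp [measure_setOf_apply_ne_apply_succ hμ]
    _ = ∫⁻ w, ((switchesBelow w (n ^ 3)).card : ℝ≥0∞) ∂μ := (lintegral_card_switchesBelow _).symm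
    _ ≤ ∫⁻ _, (n : ℝ≥0∞) ∂μ := lintegral_mono_ae <| hsigma.mono fun w hw => by
        exact_mod_cast card_switchesBelow_le_of_mem_sigmaSet hw n
    _ = n := by simp

lemma ae_shiftB_eq_self [IsProbabilityMeasure μ] (hμ : MeasurePreserving shiftB μ μ)
    (hsigma : ∀ᵐ w ∂μ, w ∈ SigmaSet) : ∀ᵐ w ∂μ, shiftB w = w := by
  have h : ∀ᵐ w ∂μ, ∀ i, w i = w (i + 1) := ae_all_iff.2 fun i =>
    ae_iff.2 <| (measure_setOf_apply_ne_apply_succ hμ i).trans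
      (measure_setOf_apply_zero_ne_apply_one_eq_zero hμ hsigma)
  filter_upwards [h] with w hw
  exact funext fun i => (hw i).symm

end Measure

/-- every `σ`-invariant ergodic Borel probability measure on `Σ` is
the Dirac measure at one of the two constant sequences. -/
theorem stmt_11 (μ : Measure (ℕ → Fin 2)) [IsProbabilityMeasure μ]
    (herg : Ergodic shiftB μ) (hsupp : μ SigmaSet = 1) :
    μ = Measure.dirac (fun _ => (0 : Fin 2)) ∨ μ = Measure.dirac (fun _ => (1 : Fin 2)) := by
  have hsigma : ∀ᵐ w ∂μ, w ∈ SigmaSet :=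
    ae_iff.2 <| (prob_compl_eq_zero_iff isClosed_closure.measurableSet).2 hsupp
  have hfix := ae_shiftB_eq_self herg.toMeasurePreserving hsigma
  obtain ⟨c, hc⟩ := herg.ae_eq_const_of_ae_eq_comp₀ (g := id) measurable_id.nullMeasurable hfix
  have hμc : μ = Measure.dirac c := by
    simpa using (ProbabilityTheory.hasLaw_dirac_of_ae_eq (X := id) hc).map_eq
  obtain ⟨w, hw, hwc⟩ := (hfix.and hc).exists
  rw [hμc, ← show w = c from hwc, eq_const_of_shiftB_eq_self hw]
  by_cases h0 : w 0 = 0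
  · exact Or.inl (by rw [h0])
  · exact Or.inr (by rw [Fin.eq_one_of_ne_zero _ h0])
end

section
/- There exists a constant C > 0 such that for all integers q ≥ 2 and k ≥ 1 with q² ≤ k, at least one of the following holds: (a) there exists an integer c with 0 ≤ c < q such that S^{q}_{k}(c,c) ≥ (1/(2q)) · ∑_{m=k³}^{(k+1)³} μ(m)² − C·q; or (b) there exists an integer d with 0 ≤ d < q−1 such that −S^{q−1}_{k}(d+1,d) ≥ (1/(2(q−1))) · ∑_{m=k³}^{(k+1)³} μ(m)² − C·q. -/
/-- The Liouville function `λ(n) = (−1)^{Ω(n)}`. -/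
def liouville (n : ℕ) : ℤ := (-1) ^ (ArithmeticFunction.cardFactors n)

/-- `L_{k,q} := ⌊((k+1)³ − k³)/q⌋ − 1`. -/
def Lkq (k q : ℕ) : ℕ := ((k + 1) ^ 3 - k ^ 3) / q - 1

/-- `S^q_k(r,c) := ∑_{b=r}^{q−1+r} ∑_{j=0}^{L_{k,q}} λ(qj+c+k³)·μ(qj+b+k³)`. -/
def Sqk (q k r c : ℕ) : ℤ :=
  ∑ b ∈ Finset.Icc r (q - 1 + r), ∑ j ∈ Finset.range (Lkq k q + 1),
    liouville (q * j + c + k ^ 3) * ArithmeticFunction.moebius (q * j + b + k ^ 3)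


/-!
Let `corr a t M = ∑_{n<M} λ(a+n) μ(a+n+t)` (`liouvilleMoebiusCorr`) and `N = (k+1)³ − k³`.
Reindexing by `n = qj + c` gives `∑_{c<q} S^q_k(c,c) = ∑_{t<q} corr(k³, t, M)` and
`∑_{d<q−1} S^{q−1}_k(d+1,d) = ∑_{1≤t<q} corr(k³, t, M')` with `M = q (L_{k,q}+1)` and
`M' = (q−1)(L_{k,q−1}+1)`, both in `(N − q, N]`. Since `λ μ = μ²`, the `t = 0` term is at least
`∑_{k³≤m≤(k+1)³} μ(m)² − q`, while for `t ≥ 1` the two correlations differ by at most `q`.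
So the first total minus the second is at least `∑ μ² − q²`; one of them is at least half of that,
and pigeonhole over its `q` (resp. `q − 1`) summands gives the claim with `C = 1`.
-/

open Finset
open ArithmeticFunction hiding liouville
open scoped ArithmeticFunction.Moebius

theorem liouville_mul_moebius_self (n : ℕ) : liouville n * μ n = μ n ^ 2 := by
  by_cases h : Squarefree n
  · rw [liouville, ← moebius_apply_of_squarefree h, sq]
  · simp [moebius_eq_zero_of_not_squarefree h]

theorem abs_liouville_mul_moebius_le_one (m n : ℕ) : |liouville m * μ n| ≤ 1 := by
  rw [abs_mul, liouville, abs_pow, abs_neg, abs_one, one_pow, one_mul]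
  exact abs_moebius_le_one

theorem sum_range_mul_add_eq_sum_range {M : Type*} [AddCommMonoid M] (g : ℕ → M) (q L : ℕ) :
    ∑ c ∈ range q, ∑ j ∈ range L, g (q * j + c) = ∑ n ∈ range (q * L), g n := by
  induction L with
  | zero => simp
  | succ L ih =>
    simp only [sum_range_succ, sum_add_distrib, ih, Nat.mul_succ, sum_range_add]

theorem abs_sum_range_sub_sum_range_le {f : ℕ → ℤ} (hf : ∀ n, |f n| ≤ 1) (M M' : ℕ) :
    |∑ n ∈ range M, f n - ∑ n ∈ range M', f n| ≤ |(M : ℤ) - M'| := by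
  wlog h : M' ≤ M generalizing M M'
  · rw [abs_sub_comm, abs_sub_comm (M : ℤ)]
    exact this M' M (by omega)
  rw [← sum_Ico_eq_sub _ h]
  calc |∑ n ∈ Ico M' M, f n| ≤ ∑ n ∈ Ico M' M, |f n| := abs_sum_le_sum_abs _ _
    _ ≤ ∑ _n ∈ Ico M' M, 1 := sum_le_sum fun n _ => hf n
    _ = |(M : ℤ) - M'| := by
      rw [sum_const, Nat.card_Ico, nsmul_one, abs_of_nonneg (by omega)]
      omega

def liouvilleMoebiusCorr (a t M : ℕ) : ℤ :=
  ∑ n ∈ range M, liouville (a + n) * μ (a + n + t)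

theorem liouvilleMoebiusCorr_zero (a M : ℕ) :
    liouvilleMoebiusCorr a 0 M = ∑ n ∈ range M, μ (a + n) ^ 2 := by
  simp only [liouvilleMoebiusCorr, add_zero, liouville_mul_moebius_self]

theorem abs_liouvilleMoebiusCorr_sub_le (a t M M' : ℕ) :
    |liouvilleMoebiusCorr a t M - liouvilleMoebiusCorr a t M'| ≤ |(M : ℤ) - M'| :=
  abs_sum_range_sub_sum_range_le (fun _ => abs_liouville_mul_moebius_le_one _ _) M M'

theorem Sqk_eq_sum_range {q : ℕ} (hq : 0 < q) (k r c : ℕ) :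
    Sqk q k r c = ∑ t ∈ range q, ∑ j ∈ range (Lkq k q + 1),
      liouville (q * j + c + k ^ 3) * μ (q * j + (r + t) + k ^ 3) := by
  rw [Sqk, ← Ico_add_one_right_eq_Icc, sum_Ico_eq_sum_range, show q - 1 + r + 1 - r = q by omega]

theorem sum_Sqk_add_eq_sum_liouvilleMoebiusCorr {q : ℕ} (hq : 0 < q) (k s : ℕ) :
    ∑ c ∈ range q, Sqk q k (c + s) c =
      ∑ t ∈ range q, liouvilleMoebiusCorr (k ^ 3) (t + s) (q * (Lkq k q + 1)) := by
  simp only [Sqk_eq_sum_range hq, liouvilleMoebiusCorr]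
  rw [sum_comm]
  refine sum_congr rfl fun t _ => ?_
  rw [← sum_range_mul_add_eq_sum_range (fun n => liouville (k ^ 3 + n) * μ (k ^ 3 + n + (t + s)))]
  refine sum_congr rfl fun c _ => sum_congr rfl fun j _ => ?_
  ring_nf

theorem mul_Lkq_add_one_le_and_lt {k q : ℕ} (hq : 0 < q) (hqN : q ≤ (k + 1) ^ 3 - k ^ 3) :
    q * (Lkq k q + 1) ≤ (k + 1) ^ 3 - k ^ 3 ∧ (k + 1) ^ 3 - k ^ 3 < q * (Lkq k q + 1) + q := by
  have hL : Lkq k q + 1 = ((k + 1) ^ 3 - k ^ 3) / q := by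
    have := (Nat.one_le_div_iff hq).mpr hqN
    rw [Lkq]; omega
  rw [hL, mul_comm]
  exact ⟨Nat.div_mul_le_self _ _, Nat.lt_div_mul_add hq⟩

theorem sum_moebius_sq_Icc_le {a M : ℕ} (N : ℕ) :
    ∑ m ∈ Icc a (a + N), μ m ^ 2 ≤ liouvilleMoebiusCorr a 0 M + |(N + 1 : ℤ) - M| := by
  have hsq : ∀ n, |μ (a + n) ^ 2| ≤ 1 := fun n => by
    rw [abs_pow, sq_abs, moebius_sq]; split_ifs <;> norm_num
  have h := le_of_abs_le (abs_sum_range_sub_sum_range_le hsq (N + 1) M)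
  rw [← Ico_add_one_right_eq_Icc, sum_Ico_eq_sum_range, show a + N + 1 - a = N + 1 by omega,
    liouvilleMoebiusCorr_zero]
  push_cast at h
  linarith

theorem sum_moebius_sq_sub_sq_le {q k : ℕ} (hq : 2 ≤ q) (hqN : q ≤ (k + 1) ^ 3 - k ^ 3) :
    ∑ m ∈ Icc (k ^ 3) ((k + 1) ^ 3), μ m ^ 2 - q ^ 2 ≤
      ∑ c ∈ range q, Sqk q k c c - ∑ d ∈ range (q - 1), Sqk (q - 1) k (d + 1) d := by
  obtain ⟨p, rfl⟩ : ∃ p, q = p + 1 := ⟨q - 1, by omega⟩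
  obtain ⟨hMN, hNM⟩ := mul_Lkq_add_one_le_and_lt (k := k) (q := p + 1) (by omega) hqN
  obtain ⟨hM'N, hNM'⟩ := mul_Lkq_add_one_le_and_lt (k := k) (q := p) (by omega) (by omega)
  set N := (k + 1) ^ 3 - k ^ 3
  set M := (p + 1) * (Lkq k (p + 1) + 1)
  set M' := p * (Lkq k p + 1)
  have hdiag := sum_moebius_sq_Icc_le (a := k ^ 3) (M := M) N
  rw [show k ^ 3 + N = (k + 1) ^ 3 by omega, abs_of_nonneg (by omega)] at hdiag
  have hoff : ∀ t ∈ range p, -((p + 1 : ℕ) : ℤ) ≤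
      liouvilleMoebiusCorr (k ^ 3) (t + 1) M - liouvilleMoebiusCorr (k ^ 3) (t + 1) M' := by
    intro t _
    have hMM' : |(M : ℤ) - M'| ≤ (p + 1 : ℕ) := by rw [abs_le]; omega
    exact (abs_le.mp ((abs_liouvilleMoebiusCorr_sub_le (k ^ 3) (t + 1) M M').trans hMM')).1
  have hdiff := card_nsmul_le_sum _ _ _ hoff
  have hA := sum_Sqk_add_eq_sum_liouvilleMoebiusCorr (q := p + 1) (by omega) k 0
  have hB := sum_Sqk_add_eq_sum_liouvilleMoebiusCorr (q := p) (by omega) k 1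
  simp only [add_zero] at hA
  rw [Nat.add_sub_cancel, hA, hB, sum_range_succ', ← sub_add_eq_add_sub, ← sum_sub_distrib]
  rw [card_range, nsmul_eq_mul] at hdiff
  have hNM_int : (N : ℤ) + 1 - M ≤ p + 1 := by omega
  push_cast at hdiff hdiag ⊢
  linarith

theorem exists_div_le_of_le_sum_range {f : ℕ → ℝ} {n : ℕ} (hn : 0 < n) {X : ℝ}
    (h : X ≤ ∑ i ∈ range n, f i) : ∃ i < n, X / n ≤ f i := by
  have hX : ∑ _i ∈ range n, X / n = X := by
    rw [sum_const, card_range, nsmul_eq_mul, mul_div_cancel₀ _ (by positivity)]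
  obtain ⟨i, hi, hle⟩ := exists_le_of_sum_le (nonempty_range_iff.mpr hn.ne') (hX.trans_le h)
  exact ⟨i, mem_range.mp hi, hle⟩

theorem one_div_two_mul_mul_sub_le_of_le_two_mul {T q a : ℝ} (ha : 0 < a) (hq : 0 ≤ q) (hqa : q ≤ 2 * a) :
    1 / (2 * a) * T - q ≤ (T - q ^ 2) / 2 / a := by
  have hsq : q ^ 2 / (2 * a) ≤ q := by
    rw [div_le_iff₀ (by positivity)]
    nlinarith
  calc 1 / (2 * a) * T - q ≤ 1 / (2 * a) * T - q ^ 2 / (2 * a) := by linarith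
    _ = (T - q ^ 2) / 2 / a := by ring

theorem le_cube_succ_sub_cube (k : ℕ) : k ≤ (k + 1) ^ 3 - k ^ 3 :=
  le_tsub_of_add_le_left (by nlinarith)

/-- for `q² ≤ k`, one of the two key correlation lower bounds holds. -/
theorem stmt_12 :
    ∃ C : ℝ, 0 < C ∧ ∀ q k : ℕ, 2 ≤ q → 1 ≤ k → q ^ 2 ≤ k →
      (∃ c : ℕ, c < q ∧
        (1 / (2 * (q : ℝ))) *
            (∑ m ∈ Finset.Icc (k ^ 3) ((k + 1) ^ 3),
              (ArithmeticFunction.moebius m : ℝ) ^ 2) - C * q ≤ (Sqk q k c c : ℝ)) ∨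
      (∃ d : ℕ, d < q - 1 ∧
        (1 / (2 * ((q : ℝ) - 1))) *
            (∑ m ∈ Finset.Icc (k ^ 3) ((k + 1) ^ 3),
              (ArithmeticFunction.moebius m : ℝ) ^ 2) - C * q ≤
          -(Sqk (q - 1) k (d + 1) d : ℝ)) := by
  refine ⟨1, one_pos, fun q k hq _ hqk => ?_⟩
  have hqN : q ≤ (k + 1) ^ 3 - k ^ 3 :=
    (Nat.le_self_pow two_ne_zero q).trans (hqk.trans (le_cube_succ_sub_cube k))
  set T : ℝ := ∑ m ∈ Icc (k ^ 3) ((k + 1) ^ 3), (μ m : ℝ) ^ 2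
  have hqR : (2 : ℝ) ≤ q := by exact_mod_cast hq
  have hmain : T - q ^ 2 ≤
      ∑ c ∈ range q, (Sqk q k c c : ℝ) + ∑ d ∈ range (q - 1), -(Sqk (q - 1) k (d + 1) d : ℝ) := by
    have := (Int.cast_le (R := ℝ)).mpr (sum_moebius_sq_sub_sq_le hq hqN)
    push_cast at this
    rw [sum_neg_distrib]
    linarith
  rcases le_or_gt ((T - q ^ 2) / 2) (∑ c ∈ range q, (Sqk q k c c : ℝ)) with hA | hA
  · obtain ⟨c, hc, hle⟩ := exists_div_le_of_le_sum_range (by omega) hA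
    refine .inl ⟨c, hc, le_trans ?_ hle⟩
    rw [one_mul]
    exact one_div_two_mul_mul_sub_le_of_le_two_mul (by linarith) (by linarith) (by linarith)
  · obtain ⟨d, hd, hle⟩ := exists_div_le_of_le_sum_range
      (f := fun d => -(Sqk (q - 1) k (d + 1) d : ℝ)) (n := q - 1) (X := (T - q ^ 2) / 2) (by omega)
      (by linarith)
    rw [Nat.cast_pred (by omega)] at hle
    refine .inr ⟨d, hd, le_trans ?_ hle⟩
    rw [one_mul]
    exact one_div_two_mul_mul_sub_le_of_le_two_mul (by linarith) (by linarith) (by linarith)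
end

section
/- Let q : ℕ → ℕ with q_k ≥ 1 for all k and q_k → ∞, and let X be the associated subshift of the skew product system (Z,T). Then every T-invariant ergodic Borel probability measure ν on X is supported on fixed points: ν({ x ∈ X : T x = x }) = 1. -/
open MeasureTheory

/-- The left shift on one-sided sequences (indexed by positive integers). -/
def shiftN (y : ℕ → ℤ) : ℕ → ℤ := fun n => y (n + 1)

/-- The (invertible) shift by `m ∈ ℤ` on two-sided sequences: `(σ^m z)(n) = z(n + m)`. -/
def shiftZ (m : ℤ) (z : ℤ → ℤ) : ℤ → ℤ := fun n => z (n + m)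

/-- The skew product `T(y,z) = (σ y, σ^{y₁} z)` on `Z = {−1,0,1}^ℕ × {−1,1}^ℤ`. -/
def Tskew (p : (ℕ → ℤ) × (ℤ → ℤ)) : (ℕ → ℤ) × (ℤ → ℤ) :=
  (shiftN p.1, shiftZ (p.1 1) p.2)

/-- The set `P` associated to `q : ℕ → ℕ`: `{−1,0,1}`-valued sequences whose
restriction to each block `[k³, (k+1)³)` is the corresponding restriction of
`σ^{−p} s_{k,q_k}` for some `0 ≤ p ≤ q_k`. -/
def setP (q : ℕ → ℕ) : Set (ℕ → ℤ) :=
  {y | (∀ n, y n = -1 ∨ y n = 0 ∨ y n = 1) ∧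
    ∀ k, 1 ≤ k → ∃ p, p ≤ q k ∧
      ∀ n, k ^ 3 ≤ n → n < (k + 1) ^ 3 → y n = shiftDown p (skq k (q k)) n}

/-- The set `{−1,1}^ℤ` of two-sided `±1`-valued sequences. -/
def setPM : Set (ℤ → ℤ) := {z | ∀ m, z m = -1 ∨ z m = 1}

/-- The subshift `X`: closure of `∪_{n ≥ 0} T^n (P × {−1,1}^ℤ)` in `Z`. -/
def setX (q : ℕ → ℕ) : Set ((ℕ → ℤ) × (ℤ → ℤ)) :=
  closure (⋃ n : ℕ, Tskew^[n] '' (setP q ×ˢ setPM))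

open scoped ENNReal
open Finset Filter

/-!
On each block `[k³, (k+1)³)` the nonzero entries of a point of `P` lie in a single residue class
mod `q_k`. Hence, once `q_k ≥ c` from the block `k₀ ≥ c` on, a window of length `c²` beyond `k₀³`
meets at most two blocks and carries at most `2c` nonzero entries; this bound is closed and
shift-invariant, so it holds on all of `X`. Under a `T`-invariant probability measure every
coordinate of `y` is nonzero with the same probability `a`, and averaging over such a window gives
`c² a ≤ 2c` for every `c`, so `a = 0`. Almost surely `y = 0`, and such points are fixed by `T`.
-/

lemma Tskew_iterate_fst_apply (n : ℕ) (x : (ℕ → ℤ) × (ℤ → ℤ)) (m : ℕ) :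
    (Tskew^[n] x).1 m = x.1 (m + n) := by
  induction n generalizing x with
  | zero => rfl
  | succ n ih =>
    rw [Function.iterate_succ_apply, ih]
    exact congrArg x.1 (by omega)

lemma Tskew_eq_self_of_fst_eq_zero {x : (ℕ → ℤ) × (ℤ → ℤ)} (hx : x.1 = 0) : Tskew x = x := by
  refine Prod.ext (funext fun n => ?_) (funext fun n => ?_)
  · simp [Tskew, shiftN, hx]
  · simp [Tskew, shiftZ, hx]

lemma card_le_of_forall_lt_mul_of_modEq {s : Finset ℕ} {c d : ℕ} (hlt : ∀ i ∈ s, i < d * c)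
    (hmod : ∀ i ∈ s, ∀ j ∈ s, i ≡ j [MOD d]) : #s ≤ c := by
  calc #s ≤ #(range c) :=
        card_le_card_of_injOn (· / d) (fun i hi => by simpa using Nat.div_lt_of_lt_mul (hlt i hi))
          fun i hi j hj hij => by
            rw [← Nat.div_add_mod i d, ← Nat.div_add_mod j d, hmod i hi j hj,
              show i / d = j / d from hij]
    _ = c := card_range c

lemma exists_modEq_of_mem_setP {q : ℕ → ℕ} {y : ℕ → ℤ} (hy : y ∈ setP q) {k : ℕ} (hk : 1 ≤ k) :
    ∃ a, ∀ n, k ^ 3 ≤ n → n < (k + 1) ^ 3 → y n ≠ 0 → n ≡ a [MOD q k] := by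
  obtain ⟨p, -, hp⟩ := hy.2 k hk
  refine ⟨k ^ 3 + p, fun n hkn hnk hyn => ?_⟩
  rw [hp n hkn hnk] at hyn
  have hpn : p < n := by
    by_contra h
    exact hyn (if_neg h)
  obtain ⟨j, -, hj⟩ : ∃ j : ℕ, j + 1 ≤ ((k + 1) ^ 3 - k ^ 3) / q k ∧ n - p = k ^ 3 + j * q k := by
    by_contra h
    exact hyn ((if_pos hpn).trans (if_neg h))
  have : n = k ^ 3 + p + j * q k := by omega
  rw [this]
  exact Nat.add_mul_mod_self_right _ _ _

lemma exists_pow_three_le_lt (M : ℕ) : ∃ k, k ^ 3 ≤ M ∧ M < (k + 1) ^ 3 := by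
  obtain ⟨k, hk, hk'⟩ :=
    (Nat.pow_left_strictMono (n := 3) (by norm_num)).exists_between_of_tendsto_atTop
      (tendsto_pow_atTop (by norm_num)) (Nat.zero_lt_succ M)
  exact ⟨k, Nat.lt_succ_iff.1 hk, hk'⟩

lemma card_le_of_mem_setP_of_subset_block {q : ℕ → ℕ} {y : ℕ → ℤ} (hy : y ∈ setP q) {k : ℕ}
    (hk : 1 ≤ k) {M c : ℕ} {s : Finset ℕ}
    (hs : ∀ i ∈ s, i < q k * c ∧ k ^ 3 ≤ M + i ∧ M + i < (k + 1) ^ 3 ∧ y (M + i) ≠ 0) :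
    #s ≤ c := by
  obtain ⟨a, ha⟩ := exists_modEq_of_mem_setP hy hk
  have hmod : ∀ i ∈ s, M + i ≡ a [MOD q k] := fun i hi =>
    ha _ (hs i hi).2.1 (hs i hi).2.2.1 (hs i hi).2.2.2
  exact card_le_of_forall_lt_mul_of_modEq (fun i hi => (hs i hi).1) fun i hi j hj =>
    Nat.ModEq.add_left_cancel' M ((hmod i hi).trans (hmod j hj).symm)

lemma card_window_le_of_mem_setP {q : ℕ → ℕ} {y : ℕ → ℤ} (hy : y ∈ setP q) {c k₀ M : ℕ}
    (hck : c ≤ k₀) (hq : ∀ k, k₀ ≤ k → c ≤ q k) (hM : k₀ ^ 3 ≤ M) :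
    #{i ∈ range (c ^ 2) | y (M + i) ≠ 0} ≤ 2 * c := by
  obtain rfl | hc := Nat.eq_zero_or_pos c
  · simp
  obtain ⟨k, hkM, hMk⟩ := exists_pow_three_le_lt M
  have hk₀k : k₀ ≤ k :=
    Nat.lt_succ_iff.1 <| (Nat.pow_lt_pow_iff_left (by norm_num)).1 (hM.trans_lt hMk)
  have hend : M + c ^ 2 ≤ (k + 1 + 1) ^ 3 := by nlinarith
  have hsq : ∀ k', k₀ ≤ k' → c ^ 2 ≤ q k' * c := fun k' hk' => by
    rw [sq]; exact Nat.mul_le_mul_right c (hq k' hk')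
  rw [← card_filter_add_card_filter_not (fun i => M + i < (k + 1) ^ 3), two_mul]
  refine add_le_add
    (card_le_of_mem_setP_of_subset_block hy (k := k) (M := M) (by omega) fun i hi => ?_)
    (card_le_of_mem_setP_of_subset_block hy (k := k + 1) (M := M) (by omega) fun i hi => ?_)
  all_goals
    simp only [mem_filter, mem_range] at hi
    have := hsq k hk₀k
    have := hsq (k + 1) (by omega)
    omega

lemma isClosed_setOf_card_window_le (M L N : ℕ) :
    IsClosed {x : (ℕ → ℤ) × (ℤ → ℤ) | #{i ∈ range L | x.1 (M + i) ≠ 0} ≤ N} := by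
  have hcont : Continuous fun x : (ℕ → ℤ) × (ℤ → ℤ) => #{i ∈ range L | x.1 (M + i) ≠ 0} := by
    simp_rw [card_filter]
    exact continuous_finsetSum _ fun i _ =>
      (continuous_of_discreteTopology (f := fun v : ℤ => if v ≠ 0 then 1 else 0)).comp
        ((continuous_apply (M + i)).comp continuous_fst)
  exact isClosed_le hcont continuous_const

lemma card_window_le_of_mem_setX {q : ℕ → ℕ} {x : (ℕ → ℤ) × (ℤ → ℤ)} (hx : x ∈ setX q)
    {c k₀ M : ℕ} (hck : c ≤ k₀) (hq : ∀ k, k₀ ≤ k → c ≤ q k) (hM : k₀ ^ 3 ≤ M) :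
    #{i ∈ range (c ^ 2) | x.1 (M + i) ≠ 0} ≤ 2 * c := by
  refine closure_minimal ?_ (isClosed_setOf_card_window_le M (c ^ 2) (2 * c)) hx
  rintro _ ⟨_, ⟨n, rfl⟩, ⟨y, z⟩, ⟨hy, -⟩, rfl⟩
  simp only [Set.mem_ofPred_eq, Tskew_iterate_fst_apply, add_right_comm M]
  exact card_window_le_of_mem_setP hy hck hq (by omega)

lemma MeasureTheory.MeasurePreserving.natCast_mul_measure_le {α : Type*} [MeasurableSpace α]
    {μ : Measure α} [IsProbabilityMeasure μ] {f : α → α} (hf : MeasurePreserving f μ μ)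
    {s : Set α} [DecidablePred (· ∈ s)] (hs : MeasurableSet s) {L N : ℕ}
    (h : ∀ᵐ x ∂μ, #{i ∈ range L | f^[i] x ∈ s} ≤ N) :
    (L : ℝ≥0∞) * μ s ≤ N := by
  have hmeas : ∀ i, MeasurableSet (f^[i] ⁻¹' s) := fun i => (hf.iterate i).measurable hs
  calc (L : ℝ≥0∞) * μ s = ∑ i ∈ range L, μ (f^[i] ⁻¹' s) := by
        simp [(hf.iterate _).measure_preimage hs.nullMeasurableSet]
    _ = ∫⁻ x, ∑ i ∈ range L, (f^[i] ⁻¹' s).indicator 1 x ∂μ := by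
        rw [lintegral_finsetSum _ fun i _ => measurable_one.indicator (hmeas i)]
        simp only [lintegral_indicator_one (hmeas _)]
    _ = ∫⁻ x, (#{i ∈ range L | f^[i] x ∈ s} : ℝ≥0∞) ∂μ := by
        refine lintegral_congr fun x => ?_
        rw [card_filter, Nat.cast_sum]
        refine sum_congr rfl fun i _ => ?_
        by_cases hi : f^[i] x ∈ s <;> simp [hi]
    _ ≤ ∫⁻ _, (N : ℝ≥0∞) ∂μ := lintegral_mono_ae (h.mono fun x hx => by exact_mod_cast hx)
    _ = N := by simp

lemma ENNReal.eq_zero_of_forall_natCast_sq_mul_le {a : ℝ≥0∞}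
    (h : ∀ c : ℕ, (c : ℝ≥0∞) ^ 2 * a ≤ 2 * c) : a = 0 := by
  by_contra ha
  obtain ⟨n, hn⟩ := ENNReal.exists_nat_mul_gt ha (ENNReal.ofNat_ne_top (n := 2))
  have hn0 : (n : ℝ≥0∞) ≠ 0 := by
    rintro h0
    simp [h0] at hn
  have : (n : ℝ≥0∞) * (n * a) ≤ n * 2 := by
    simpa only [sq, mul_assoc, mul_comm (2 : ℝ≥0∞)] using h n
  exact ((ENNReal.mul_le_mul_iff_right hn0 (ENNReal.natCast_ne_top n)).1 this).not_gt hn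

lemma measurableSet_fst_apply_ne_zero (n : ℕ) :
    MeasurableSet {x : (ℕ → ℤ) × (ℤ → ℤ) | x.1 n ≠ 0} :=
  ((measurable_pi_apply n).comp measurable_fst) (measurableSet_singleton 0).compl

lemma measure_fst_apply_ne_zero_eq_zero {q : ℕ → ℕ} (hq : Tendsto q atTop atTop)
    {ν : Measure ((ℕ → ℤ) × (ℤ → ℤ))} [IsProbabilityMeasure ν] (hT : MeasurePreserving Tskew ν ν)
    (hsupp : ν (setX q) = 1) (n : ℕ) :
    ν {x | x.1 n ≠ 0} = 0 := by
  have hinv : ∀ m, ν {x | x.1 m ≠ 0} = ν {x | x.1 0 ≠ 0} := fun m => by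
    have hpre : Tskew^[m] ⁻¹' {x | x.1 0 ≠ 0} = {x | x.1 m ≠ 0} := by
      ext x
      simp [Tskew_iterate_fst_apply]
    rw [← hpre,
      (hT.iterate m).measure_preimage (measurableSet_fst_apply_ne_zero 0).nullMeasurableSet]
  have hX : ∀ᵐ x ∂ν, x ∈ setX q :=
    (mem_ae_iff_prob_eq_one isClosed_closure.measurableSet).2 hsupp
  rw [hinv]
  refine ENNReal.eq_zero_of_forall_natCast_sq_mul_le fun c => ?_
  obtain ⟨k₁, hk₁⟩ := eventually_atTop.1 (hq.eventually_ge_atTop c)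
  have hqc : ∀ k, max c k₁ ≤ k → c ≤ q k := fun k hk => hk₁ k (le_of_max_le_right hk)
  rw [← hinv (max c k₁ ^ 3)]
  have hwindow : ∀ᵐ x ∂ν,
      #{i ∈ range (c ^ 2) | Tskew^[i] x ∈ {x | x.1 (max c k₁ ^ 3) ≠ 0}} ≤ 2 * c := by
    filter_upwards [hX] with x hx
    simp only [Tskew_iterate_fst_apply]
    exact card_window_le_of_mem_setX hx (le_max_left _ _) hqc le_rfl
  exact_mod_cast hT.natCast_mul_measure_le (measurableSet_fst_apply_ne_zero _) hwindow

theorem stmt_18_general (q : ℕ → ℕ)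
    (hq : Filter.Tendsto q Filter.atTop Filter.atTop)
    (ν : Measure ((ℕ → ℤ) × (ℤ → ℤ))) [IsProbabilityMeasure ν]
    (herg : Ergodic Tskew ν) (hsupp : ν (setX q) = 1) :
    ν {x : (ℕ → ℤ) × (ℤ → ℤ) | Tskew x = x} = 1 := by
  have hfst : ∀ᵐ x ∂ν, x.1 = 0 := by
    refine (ae_all_iff.2 fun n => ?_).mono fun x hx => funext hx
    simpa [ae_iff] using measure_fst_apply_ne_zero_eq_zero hq herg.toMeasurePreserving hsupp n
  have hfix : ∀ᵐ x ∂ν, Tskew x = x := hfst.mono fun x => Tskew_eq_self_of_fst_eq_zero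
  have : {x | Tskew x = x} =ᵐ[ν] Set.univ := ae_eq_univ.2 (ae_iff.1 hfix)
  rw [measure_congr this, measure_univ]

/-- every `T`-invariant ergodic Borel probability measure on the
subshift `X` is supported on the set of fixed points of `T`. -/
theorem stmt_18 (q : ℕ → ℕ) (hq1 : ∀ k, 1 ≤ q k)
    (hq : Filter.Tendsto q Filter.atTop Filter.atTop)
    (ν : Measure ((ℕ → ℤ) × (ℤ → ℤ))) [IsProbabilityMeasure ν]
    (herg : Ergodic Tskew ν) (hsupp : ν (setX q) = 1) :
    ν {x : (ℕ → ℤ) × (ℤ → ℤ) | Tskew x = x} = 1 :=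
  stmt_18_general q hq ν herg hsupp
end
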